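/- arXiv:1204.3686 — 2 statements merged into one kernel-verified Lean document; each statement's English description precedes it below -/
import Mathlib

section
/- Let G be a finite graph obtained from the theta graph θ(2,2,l) by attaching pendant edges at some vertices of its two cycles, let u and v be the two vertices of θ(2,2,l) of degree 3, and let w and t be the two internal vertices of the two paths of length 2 joining u and v. If d_G(w) > 2 and d_G(t) = 2, then (G;w,w) ≻ (G;t,t). -/
open SimpleGraph Matrix Polynomial

namespace EstradaBicyclic

variable {V W : Type*}

/-- `Mk G k u v` is the number of walks of length `k` from `u` to `v` in `G`,
computed as the `(u,v)` entry of the `k`-th power of the adjacency matrix. -/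
noncomputable def Mk [Fintype V] (G : SimpleGraph V) (k : ℕ) (u v : V) : ℕ :=
  letI := Classical.decEq V
  letI := Classical.decRel G.Adj
  (G.adjMatrix ℕ ^ k) u v

/-- The Estrada index of a finite graph: the trace of the matrix exponential of the
adjacency matrix. -/
noncomputable def EE [Fintype V] (G : SimpleGraph V) : ℝ :=
  letI := Classical.decEq V
  letI := Classical.decRel G.Adj
  (NormedSpace.exp (G.adjMatrix ℝ)).trace

/-- `(G;u,v) ⪯ (H;s,t)`: for every positive `k`, the number of `k`-walks from `u` to `v`
in `G` is at most the number of `k`-walks from `s` to `t` in `H`. -/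
def MLE [Fintype V] [Fintype W] (G : SimpleGraph V) (u v : V)
    (H : SimpleGraph W) (s t : W) : Prop :=
  ∀ k : ℕ, 0 < k → Mk G k u v ≤ Mk H k s t

/-- `(G;u,v) ≺ (H;s,t)`: `⪯` together with strict inequality for at least one positive `k`. -/
def MLT [Fintype V] [Fintype W] (G : SimpleGraph V) (u v : V)
    (H : SimpleGraph W) (s t : W) : Prop :=
  MLE G u v H s t ∧ ∃ k : ℕ, 0 < k ∧ Mk G k u v < Mk H k s t

/-- The degree of a vertex, via the natural cardinality of its neighbor set. -/
noncomputable def deg (G : SimpleGraph V) (x : V) : ℕ :=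
  (G.neighborSet x).ncard

/-- The coalescence `G(u)∘H(w)` of two vertex-disjoint graphs: identify `u ∈ V(G)`
with `w ∈ V(H)`.  The merged vertex is represented by `Sum.inl u`. -/
def coalescence (G : SimpleGraph V) (H : SimpleGraph W) (u : V) (w : W) :
    SimpleGraph (V ⊕ {x : W // x ≠ w}) where
  Adj x y :=
    match x, y with
    | Sum.inl a, Sum.inl b => G.Adj a b
    | Sum.inl a, Sum.inr b => a = u ∧ H.Adj w b.1
    | Sum.inr a, Sum.inl b => b = u ∧ H.Adj w a.1
    | Sum.inr a, Sum.inr b => H.Adj a.1 b.1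
  symm := ⟨by
    rintro (a | a) (b | b) h
    · exact h.symm
    · exact h
    · exact h
    · exact h.symm⟩
  loopless := ⟨by
    rintro (a | a) h
    · exact G.loopless.irrefl a h
    · exact H.loopless.irrefl a.1 h⟩

/-- A connected graph is bicyclic when its number of edges exceeds its number of
vertices by one. -/
def IsBicyclic [Fintype V] (G : SimpleGraph V) : Prop :=
  G.Connected ∧ G.edgeSet.ncard = Fintype.card V + 1

/-- A connected graph is unicyclic when its number of edges equals its number of vertices. -/
def IsUnicyclic [Fintype V] (G : SimpleGraph V) : Prop :=
  G.Connected ∧ G.edgeSet.ncard = Fintype.card V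

/-- Two walks with common endpoints `u`, `v` are internally disjoint. -/
def InternallyDisjoint {G : SimpleGraph V} {u v : V} (P Q : G.Walk u v) : Prop :=
  ∀ x, x ∈ P.support → x ∈ Q.support → x = u ∨ x = v

/-- Numerical constraints for a theta graph `θ(p,q,l)`: all lengths positive and at most
one of them equal to `1`. -/
def ThetaConstraints (p q l : ℕ) : Prop :=
  1 ≤ p ∧ 1 ≤ q ∧ 1 ≤ l ∧ ¬(p = 1 ∧ q = 1) ∧ ¬(p = 1 ∧ l = 1) ∧ ¬(q = 1 ∧ l = 1)

/-- `P₁, P₂, P₃` are three internally disjoint paths of lengths `p, q, l` joining `u` to `v`. -/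
def ThetaPaths {G : SimpleGraph V} {u v : V} (p q l : ℕ)
    (P₁ P₂ P₃ : G.Walk u v) : Prop :=
  P₁.IsPath ∧ P₂.IsPath ∧ P₃.IsPath ∧
  P₁.length = p ∧ P₂.length = q ∧ P₃.length = l ∧
  InternallyDisjoint P₁ P₂ ∧ InternallyDisjoint P₁ P₃ ∧ InternallyDisjoint P₂ P₃

/-- `G` contains `θ(p,q,l)` as a subgraph with branch vertices `u` and `v`. -/
def HasThetaKernel (G : SimpleGraph V) (p q l : ℕ) (u v : V) : Prop :=
  ThetaConstraints p q l ∧ ∃ P₁ P₂ P₃ : G.Walk u v, ThetaPaths p q l P₁ P₂ P₃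

/-- `G` is exactly the theta graph `θ(p,q,l)` with branch vertices `u`, `v`:
the three paths cover all vertices and all edges of `G`. -/
def IsThetaGraph (G : SimpleGraph V) (p q l : ℕ) (u v : V) : Prop :=
  ThetaConstraints p q l ∧ ∃ P₁ P₂ P₃ : G.Walk u v, ThetaPaths p q l P₁ P₂ P₃ ∧
    (∀ x : V, x ∈ P₁.support ∨ x ∈ P₂.support ∨ x ∈ P₃.support) ∧
    (∀ e ∈ G.edgeSet, e ∈ P₁.edges ∨ e ∈ P₂.edges ∨ e ∈ P₃.edges)

/-- Every vertex of `G` outside the three paths is a pendant vertex whose unique neighbor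
lies on the paths, and every edge of `G` between vertices of the paths is an edge of one
of the paths. I.e. `G` is obtained from the union of the three paths by attaching pendant
edges at some of its vertices. -/
def PendantConditions (G : SimpleGraph V) {u v : V} (P₁ P₂ P₃ : G.Walk u v) : Prop :=
  (∀ x : V, x ∉ P₁.support → x ∉ P₂.support → x ∉ P₃.support →
    ∃ y, (y ∈ P₁.support ∨ y ∈ P₂.support ∨ y ∈ P₃.support) ∧
      G.Adj x y ∧ ∀ z, G.Adj x z → z = y) ∧
  (∀ e ∈ G.edgeSet, (∀ x ∈ e, x ∈ P₁.support ∨ x ∈ P₂.support ∨ x ∈ P₃.support) →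
    e ∈ P₁.edges ∨ e ∈ P₂.edges ∨ e ∈ P₃.edges)

/-- `G` is obtained from the theta graph `θ(p,q,l)` (with branch vertices `u`, `v`)
by attaching pendant edges at some of its vertices. -/
def ThetaWithPendants (G : SimpleGraph V) (p q l : ℕ) (u v : V) : Prop :=
  ThetaConstraints p q l ∧ ∃ P₁ P₂ P₃ : G.Walk u v,
    ThetaPaths p q l P₁ P₂ P₃ ∧ PendantConditions G P₁ P₂ P₃

/-- Numerical constraints for an infinity graph `∞(p,q,l)`. -/
def InftyConstraints (p q l : ℕ) : Prop := 3 ≤ p ∧ 3 ≤ q ∧ 1 ≤ l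

/-- `c₁`, `c₂`, `P` form an `∞(p,q,l)`-configuration: cycles of lengths `p` and `q`
through `a` and `b` respectively, joined by a path of length `l-1` from `a` to `b`,
with the correct disjointness. -/
def InftyPaths {G : SimpleGraph V} {a b : V} (p q l : ℕ)
    (c₁ : G.Walk a a) (c₂ : G.Walk b b) (P : G.Walk a b) : Prop :=
  c₁.IsCycle ∧ c₂.IsCycle ∧ P.IsPath ∧
  c₁.length = p ∧ c₂.length = q ∧ P.length = l - 1 ∧
  (∀ x, x ∈ c₁.support → x ∈ c₂.support → x = a ∧ x = b) ∧
  (∀ x, x ∈ c₁.support → x ∈ P.support → x = a) ∧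
  (∀ x, x ∈ c₂.support → x ∈ P.support → x = b)

/-- `G` contains `∞(p,q,l)` as a subgraph, with cycle base vertices `a` and `b`. -/
def HasInftyKernel (G : SimpleGraph V) (p q l : ℕ) (a b : V) : Prop :=
  InftyConstraints p q l ∧ ∃ (c₁ : G.Walk a a) (c₂ : G.Walk b b) (P : G.Walk a b),
    InftyPaths p q l c₁ c₂ P

/-- `G` is obtained from the infinity graph `∞(p,q,l)` by attaching pendant edges at
some of its vertices. -/
def InftyWithPendants (G : SimpleGraph V) (p q l : ℕ) (a b : V) : Prop :=
  InftyConstraints p q l ∧ ∃ (c₁ : G.Walk a a) (c₂ : G.Walk b b) (P : G.Walk a b),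
    InftyPaths p q l c₁ c₂ P ∧
    (∀ x : V, x ∉ c₁.support → x ∉ c₂.support → x ∉ P.support →
      ∃ y, (y ∈ c₁.support ∨ y ∈ c₂.support ∨ y ∈ P.support) ∧
        G.Adj x y ∧ ∀ z, G.Adj x z → z = y) ∧
    (∀ e ∈ G.edgeSet, (∀ x ∈ e, x ∈ c₁.support ∨ x ∈ c₂.support ∨ x ∈ P.support) →
      e ∈ c₁.edges ∨ e ∈ c₂.edges ∨ e ∈ P.edges)

/-- Membership in `𝒢_∞(n;p,q)`: bicyclic graphs of order `n` whose kernel is an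
`∞`-graph with cycle lengths `p` and `q`. -/
def MemGInfty [Fintype V] (n p q : ℕ) (G : SimpleGraph V) : Prop :=
  Fintype.card V = n ∧ IsBicyclic G ∧ ∃ (l : ℕ) (a b : V), HasInftyKernel G p q l a b

/-- Membership in `𝒢_θ(n;p,q)`: bicyclic graphs of order `n` whose kernel is a
`θ`-graph `θ(p',q',l')` with `p' ≥ q' ≥ l'`, `p' + l' = p` and `q' + l' = q`. -/
def MemGTheta [Fintype V] (n p q : ℕ) (G : SimpleGraph V) : Prop :=
  Fintype.card V = n ∧ IsBicyclic G ∧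
    ∃ (p' q' l' : ℕ) (u v : V), l' ≤ q' ∧ q' ≤ p' ∧ p' + l' = p ∧ q' + l' = q ∧
      HasThetaKernel G p' q' l' u v

/-- `G` is the graph `𝐆₁`: obtained from `θ(2,2,1)` by attaching pendant edges at the
branch vertex `u` (a vertex of degree 3 of the theta graph). -/
def IsG1 [Fintype V] (G : SimpleGraph V) : Prop :=
  ∃ (u v : V) (P₁ P₂ P₃ : G.Walk u v), ThetaPaths 2 2 1 P₁ P₂ P₃ ∧
    (∀ x : V, x ∉ P₁.support → x ∉ P₂.support → x ∉ P₃.support →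
      G.Adj x u ∧ ∀ z, G.Adj x z → z = u) ∧
    (∀ e ∈ G.edgeSet, (∀ x ∈ e, x ∈ P₁.support ∨ x ∈ P₂.support ∨ x ∈ P₃.support) →
      e ∈ P₁.edges ∨ e ∈ P₂.edges ∨ e ∈ P₃.edges)

/-- `G` is the graph `𝐆₂`: obtained from `θ(2,2,2)` by attaching pendant edges at the
branch vertex `u` (a vertex of degree 3 of the theta graph). -/
def IsG2 [Fintype V] (G : SimpleGraph V) : Prop :=
  ∃ (u v : V) (P₁ P₂ P₃ : G.Walk u v), ThetaPaths 2 2 2 P₁ P₂ P₃ ∧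
    (∀ x : V, x ∉ P₁.support → x ∉ P₂.support → x ∉ P₃.support →
      G.Adj x u ∧ ∀ z, G.Adj x z → z = u) ∧
    (∀ e ∈ G.edgeSet, (∀ x ∈ e, x ∈ P₁.support ∨ x ∈ P₂.support ∨ x ∈ P₃.support) →
      e ∈ P₁.edges ∨ e ∈ P₂.edges ∨ e ∈ P₃.edges)

/-- The largest adjacency eigenvalue of a finite graph. -/
noncomputable def lambda1 [Fintype V] (G : SimpleGraph V) : ℝ :=
  letI := Classical.decEq V
  letI := Classical.decRel G.Adj
  have h : (G.adjMatrix ℝ).IsHermitian := by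
    rw [Matrix.IsHermitian, Matrix.conjTranspose_eq_transpose_of_trivial]
    exact G.isSymm_adjMatrix
  ⨆ i, h.eigenvalues i

/-- The characteristic polynomial of the adjacency matrix of a finite graph. -/
noncomputable def charPoly [Fintype V] (G : SimpleGraph V) : Polynomial ℝ :=
  letI := Classical.decEq V
  letI := Classical.decRel G.Adj
  (G.adjMatrix ℝ).charpoly


private lemma mid_of_len_two {V : Type*} {G : SimpleGraph V} {u v : V} (P : G.Walk u v)
    (hp : P.IsPath) (hlen : P.length = 2) {t : V} (ht : t ∈ P.support)
    (htu : t ≠ u) (htv : t ≠ v) :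
    G.Adj u t ∧ G.Adj t v ∧ u ≠ v := by
  cases P with
  | nil => simp at hlen
  | @cons _ b _ h p =>
    cases p with
    | nil => simp at hlen
    | @cons _ c _ h' p' =>
      cases p' with
      | nil =>
        simp only [SimpleGraph.Walk.support_cons, SimpleGraph.Walk.support_nil,
          List.mem_cons, List.mem_singleton, List.not_mem_nil] at ht
        have hb : t = b := by tauto
        subst hb
        have hnd := hp.support_nodup
        simp [SimpleGraph.Walk.support_cons] at hnd
        exact ⟨h, h', by tauto⟩
      | cons h'' p'' =>
        simp [SimpleGraph.Walk.length_cons] at hlen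

private lemma pow_diag_le {V : Type*} [Fintype V] [DecidableEq V]
    {G : SimpleGraph V} [DecidableRel G.Adj] {w t : V}
    (hkey : ∀ a, G.Adj t a → G.Adj w a) (k : ℕ) (hk : 0 < k) :
    (G.adjMatrix ℕ ^ k) t t ≤ (G.adjMatrix ℕ ^ k) w w := by
  set A := G.adjMatrix ℕ with hAdef
  have hA : ∀ a b, A a b = if G.Adj a b then 1 else 0 := fun a b => rfl
  have hle : ∀ a, A t a ≤ A w a := by
    intro a
    by_cases h : G.Adj t a
    · rw [hA, hA, if_pos h, if_pos (hkey a h)]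
    · rw [hA, if_neg h]; exact Nat.zero_le _
  have hsym : ∀ a b, A a b = A b a := by
    intro a b; rw [hA, hA]; simp [G.adj_comm]
  match k, hk with
  | 1, _ =>
    simp only [pow_one, hA, if_neg (G.loopless.irrefl t), if_neg (G.loopless.irrefl w)]
    exact le_refl 0
  | (m+2), _ =>
    have hpow : A ^ (m + 2) = A * A ^ m * A := by
      rw [pow_succ, pow_succ']
    rw [hpow]
    simp only [Matrix.mul_apply]
    apply Finset.sum_le_sum
    intro b _
    have h1 : ∑ a, A t a * (A ^ m) a b ≤ ∑ a, A w a * (A ^ m) a b :=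
      Finset.sum_le_sum fun a _ => Nat.mul_le_mul_right _ (hle a)
    calc (∑ a, A t a * (A ^ m) a b) * A b t
        ≤ (∑ a, A w a * (A ^ m) a b) * A b w := by
          apply Nat.mul_le_mul h1
          rw [hsym b t, hsym b w]; exact hle b

private lemma sq_diag_lt {V : Type*} [Fintype V] [DecidableEq V]
    {G : SimpleGraph V} [DecidableRel G.Adj] {w t : V}
    (hkey : ∀ a, G.Adj t a → G.Adj w a) {a₀ : V} (hw : G.Adj w a₀) (ht : ¬ G.Adj t a₀) :
    (G.adjMatrix ℕ ^ 2) t t < (G.adjMatrix ℕ ^ 2) w w := by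
  set A := G.adjMatrix ℕ with hAdef
  have hA : ∀ a b, A a b = if G.Adj a b then 1 else 0 := fun a b => rfl
  rw [sq]
  simp only [Matrix.mul_apply]
  apply Finset.sum_lt_sum
  · intro a _
    by_cases h : G.Adj t a
    · have h' := hkey a h
      rw [hA, hA, hA, hA, if_pos h, if_pos h', if_pos h.symm, if_pos h'.symm]
    · rw [hA, if_neg h]; simp
  · refine ⟨a₀, Finset.mem_univ _, ?_⟩
    rw [hA, hA, hA, hA, if_neg ht, if_pos hw, if_pos hw.symm]
    simp

/-- Corollary 2.6 (i).  Let `G` be obtained from `θ(2,2,l)` by attaching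
pendant edges at some of its vertices, with branch vertices `u`, `v` and internal vertices
`w`, `t` of the two paths of length `2`.  If `d_G(w) > 2` and `d_G(t) = 2`, then
`(G;w,w) ≻ (G;t,t)`. -/
theorem statement_7 {V : Type*} [Fintype V] (G : SimpleGraph V)
    (l : ℕ) (u v : V) (P₁ P₂ P₃ : G.Walk u v)
    (hcon : ThetaConstraints 2 2 l)
    (hθ : ThetaPaths 2 2 l P₁ P₂ P₃)
    (hpend : PendantConditions G P₁ P₂ P₃)
    (w t : V)
    (hw : w ∈ P₁.support) (hwu : w ≠ u) (hwv : w ≠ v)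
    (ht : t ∈ P₂.support) (htu : t ≠ u) (htv : t ≠ v)
    (hdw : 2 < deg G w) (hdt : deg G t = 2) :
    MLT G t t G w w := by
  classical
  obtain ⟨hP1, hP2, hP3, hl1, hl2, hl3, -, -, -⟩ := hθ
  obtain ⟨huw, hwv2, huv⟩ := mid_of_len_two P₁ hP1 hl1 hw hwu hwv
  obtain ⟨hut, htv2, -⟩ := mid_of_len_two P₂ hP2 hl2 ht htu htv
  have hsub : ({u, v} : Set V) ⊆ G.neighborSet t := by
    rintro a (rfl | rfl)
    · exact hut.symm
    · exact htv2
  have hNt : G.neighborSet t = {u, v} := by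
    refine (Set.eq_of_subset_of_ncard_le hsub ?_ (Set.toFinite _)).symm
    have h2 : ({u, v} : Set V).ncard = 2 := Set.ncard_pair huv
    have h1 : (G.neighborSet t).ncard = 2 := hdt
    omega
  have hkey : ∀ a, G.Adj t a → G.Adj w a := by
    intro a ha
    have : a ∈ ({u, v} : Set V) := hNt ▸ ha
    rcases this with rfl | rfl
    · exact huw.symm
    · exact hwv2
  have hex : ∃ a₀, G.Adj w a₀ ∧ ¬ G.Adj t a₀ := by
    by_contra hc
    push_neg at hc
    have hsub2 : G.neighborSet w ⊆ G.neighborSet t := fun a ha => hc a ha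
    have hle := Set.ncard_le_ncard hsub2 (Set.toFinite _)
    have h1 : (G.neighborSet w).ncard = deg G w := rfl
    have h2 : (G.neighborSet t).ncard = deg G t := rfl
    omega
  obtain ⟨a₀, hwa, hta⟩ := hex
  constructor
  · intro k hk
    simp only [Mk]
    exact pow_diag_le hkey k hk
  · refine ⟨2, by norm_num, ?_⟩
    simp only [Mk]
    exact sq_diag_lt hkey hwa hta


end EstradaBicyclic
end

section
/- For every integer n ≥ 5, the largest adjacency eigenvalue of G₁ satisfies λ₁(G₁) > √(n−1), where G₁ is the bicyclic graph of order n obtained from θ(2,2,1) by attaching n−4 pendant edges at one of its vertices of degree 3. Moreover, the characteristic polynomial of the adjacency matrix of G₁ is φ(G₁,x) = x^{n−4}(x⁴ − (n+1)x² − 4x + 2(n−4)). -/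
open SimpleGraph Matrix Polynomial

namespace EstradaBicyclic

variable {V W : Type*}

set_option synthInstance.maxHeartbeats 1000000
set_option maxHeartbeats 4000000

section Aux

open Matrix Polynomial

lemma aux_walk_len_one {G : SimpleGraph V} {u v : V} (w : G.Walk u v) (h : w.length = 1) :
    G.Adj u v ∧ w.support = [u, v] ∧ w.edges = [s(u,v)] := by
  cases w with
  | nil => simp at h
  | cons h' p =>
    cases p with
    | nil => exact ⟨h', by simp, by simp⟩
    | cons h'' p => simp [SimpleGraph.Walk.length_cons] at h

lemma aux_walk_len_two {G : SimpleGraph V} {u v : V} (w : G.Walk u v) (h : w.length = 2) :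
    ∃ x, G.Adj u x ∧ G.Adj x v ∧ w.support = [u, x, v] ∧ w.edges = [s(u,x), s(x,v)] := by
  cases w with
  | nil => simp at h
  | cons h' p =>
    cases p with
    | nil => simp at h
    | cons h'' p =>
      cases p with
      | nil => exact ⟨_, h', h'', by simp, by simp⟩
      | cons h3 p => simp [SimpleGraph.Walk.length_cons] at h

lemma aux_g1_structure [Fintype V] {G : SimpleGraph V} (h : IsG1 G) :
    ∃ u v a b : V, u ≠ v ∧ u ≠ a ∧ u ≠ b ∧ v ≠ a ∧ v ≠ b ∧ a ≠ b ∧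
    (∀ x y, G.Adj x y ↔
      ((s(x,y) = s(u,v) ∨ s(x,y) = s(u,a) ∨ s(x,y) = s(a,v) ∨ s(x,y) = s(u,b) ∨
        s(x,y) = s(b,v)) ∨
       (x ∉ ({u,v,a,b} : Set V) ∧ y = u) ∨ (y ∉ ({u,v,a,b} : Set V) ∧ x = u))) := by
  obtain ⟨u, v, P₁, P₂, P₃, ⟨hp1, hp2, hp3, hl1, hl2, hl3, hd12, hd13, hd23⟩, hpend, hedge⟩ := h
  obtain ⟨a, hua, hav, hs1, he1⟩ := aux_walk_len_two P₁ hl1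
  obtain ⟨b, hub, hbv, hs2, he2⟩ := aux_walk_len_two P₂ hl2
  obtain ⟨huv, hs3, he3⟩ := aux_walk_len_one P₃ hl3
  have hnd1 : [u, a, v].Nodup := hs1 ▸ hp1.support_nodup
  have hnd2 : [u, b, v].Nodup := hs2 ▸ hp2.support_nodup
  have hune : u ≠ v := by simp at hnd1; tauto
  have huna : u ≠ a := by simp at hnd1; tauto
  have hanv : a ≠ v := by simp at hnd1; tauto
  have hunb : u ≠ b := by simp at hnd2; tauto
  have hbnv : b ≠ v := by simp at hnd2; tauto
  have hanb : a ≠ b := by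
    intro hab
    rcases hd12 a (by simp [hs1]) (by simp [hs2, hab]) with h' | h'
    · exact huna h'.symm
    · exact hanv h'
  refine ⟨u, v, a, b, hune, huna, hunb, fun h' => hanv h'.symm, fun h' => hbnv h'.symm, hanb, ?_⟩
  have hout : ∀ x, x ∉ ({u,v,a,b} : Set V) → G.Adj x u ∧ ∀ z, G.Adj x z → z = u := by
    intro x hx
    simp only [Set.mem_insert_iff, Set.mem_singleton_iff, not_or] at hx
    exact hpend x (by simp [hs1]; tauto) (by simp [hs2]; tauto) (by simp [hs3]; tauto)
  intro x y
  constructor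
  · intro hxy
    by_cases hx : x ∈ ({u,v,a,b} : Set V)
    · by_cases hy : y ∈ ({u,v,a,b} : Set V)
      · left
        have hmem : ∀ z ∈ s(x,y), z ∈ P₁.support ∨ z ∈ P₂.support ∨ z ∈ P₃.support := by
          intro z hz
          rw [Sym2.mem_iff] at hz
          simp only [Set.mem_insert_iff, Set.mem_singleton_iff] at hx hy
          rcases hz with rfl | rfl
          · rcases hx with rfl|rfl|rfl|rfl <;> simp [hs1, hs2, hs3]
          · rcases hy with rfl|rfl|rfl|rfl <;> simp [hs1, hs2, hs3]
        rcases hedge s(x,y) hxy hmem with h' | h' | h' <;>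
          simp only [he1, he2, he3, List.mem_cons, List.mem_singleton, List.not_mem_nil,
            or_false] at h' <;> tauto
      · right; right; exact ⟨hy, (hout y hy).2 x hxy.symm⟩
    · right; left; exact ⟨hx, (hout x hx).2 y hxy⟩
  · rintro ((h'|h'|h'|h'|h') | ⟨hy, rfl⟩ | ⟨hx, rfl⟩)
    · rcases Sym2.eq_iff.mp h' with ⟨rfl, rfl⟩|⟨rfl, rfl⟩
      exacts [huv, huv.symm]
    · rcases Sym2.eq_iff.mp h' with ⟨rfl, rfl⟩|⟨rfl, rfl⟩
      exacts [hua, hua.symm]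
    · rcases Sym2.eq_iff.mp h' with ⟨rfl, rfl⟩|⟨rfl, rfl⟩
      exacts [hav, hav.symm]
    · rcases Sym2.eq_iff.mp h' with ⟨rfl, rfl⟩|⟨rfl, rfl⟩
      exacts [hub, hub.symm]
    · rcases Sym2.eq_iff.mp h' with ⟨rfl, rfl⟩|⟨rfl, rfl⟩
      exacts [hbv, hbv.symm]
    · exact (hout x hy).1
    · exact ((hout y hx).1).symm

noncomputable def auxM4 : Matrix (Fin 4) (Fin 4) ℝ := !![0,1,1,1;1,0,1,1;1,1,0,0;1,1,0,0]
noncomputable def auxBm (m : ℕ) : Matrix (Fin 4) (Fin m) ℝ :=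
  Matrix.of fun i _ => if i = 0 then 1 else 0
noncomputable def auxBtm (m : ℕ) : Matrix (Fin m) (Fin 4) ℝ :=
  Matrix.of fun _ j => if j = 0 then 1 else 0

lemma aux_block_charpoly (m : ℕ) :
    (Matrix.fromBlocks auxM4 (auxBm m) (auxBtm m) (0 : Matrix (Fin m) (Fin m) ℝ)).charpoly
      = X ^ m * (X^4 - C ((m:ℝ)+5) * X^2 - C 4 * X + C (2*(m:ℝ))) := by
  have hinj : Function.Injective (algebraMap ℝ[X] (RatFunc ℝ)) := IsFractionRing.injective _ _
  apply hinj
  rw [Matrix.charpoly, Matrix.charmatrix_fromBlocks, RingHom.map_det, RingHom.mapMatrix_apply,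
    Matrix.fromBlocks_map]
  set xk : RatFunc ℝ := RatFunc.X with hxk
  have hD : (charmatrix (0 : Matrix (Fin m) (Fin m) ℝ)).map (algebraMap ℝ[X] (RatFunc ℝ))
      = xk • (1 : Matrix (Fin m) (Fin m) (RatFunc ℝ)) := by
    ext i j
    by_cases h : i = j <;>
      simp [h, charmatrix_apply_eq, charmatrix_apply_ne, Matrix.one_apply, hxk,
        RatFunc.algebraMap_X]
  rw [hD]
  have hdet1 : ((xk • (1 : Matrix (Fin m) (Fin m) (RatFunc ℝ)))).det = xk ^ m := by
    simp [Matrix.det_smul]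
  have hxne : xk ≠ 0 := RatFunc.X_ne_zero
  haveI : Invertible (xk • (1 : Matrix (Fin m) (Fin m) (RatFunc ℝ))) :=
    Matrix.invertibleOfIsUnitDet _
      (by rw [hdet1]; exact isUnit_iff_ne_zero.mpr (pow_ne_zero _ hxne))
  rw [Matrix.det_fromBlocks₂₂]
  have hinv : ⅟(xk • (1 : Matrix (Fin m) (Fin m) (RatFunc ℝ)))
      = xk⁻¹ • (1 : Matrix (Fin m) (Fin m) (RatFunc ℝ)) := by
    apply invOf_eq_right_inv
    rw [smul_mul_smul_comm, one_mul, mul_inv_cancel₀ hxne, one_smul]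
  rw [hinv, hdet1]
  have hBK : ((-(auxBm m).map C).map (algebraMap ℝ[X] (RatFunc ℝ)))
      = Matrix.of (fun i (_ : Fin m) => if i = 0 then (-1 : RatFunc ℝ) else 0) := by
    ext i k
    by_cases h : i = 0 <;> simp [auxBm, h]
  have hBtK : ((-(auxBtm m).map C).map (algebraMap ℝ[X] (RatFunc ℝ)))
      = Matrix.of (fun (_ : Fin m) j => if j = 0 then (-1 : RatFunc ℝ) else 0) := by
    ext k j
    by_cases h : j = 0 <;> simp [auxBtm, h]
  have hchM4 : (charmatrix auxM4).map (algebraMap ℝ[X] (RatFunc ℝ))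
      = !![xk,-1,-1,-1; -1,xk,-1,-1; -1,-1,xk,0; -1,-1,0,xk] := by
    ext i j
    fin_cases i <;> fin_cases j <;>
      simp [auxM4, charmatrix_apply, Matrix.diagonal_apply, hxk, RatFunc.algebraMap_X,
        RatFunc.algebraMap_C, Matrix.vecHead, Matrix.vecTail, _root_.map_one, _root_.map_zero]
  rw [hBK, hBtK, hchM4]
  have hfour : !![xk, -1, -1, -1; -1, xk, -1, -1; -1, -1, xk, 0; -1, -1, 0, xk] -
      (Matrix.of (fun i (_ : Fin m) => if i = 0 then (-1 : RatFunc ℝ) else 0)) *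
      (xk⁻¹ • (1 : Matrix (Fin m) (Fin m) (RatFunc ℝ))) *
      (Matrix.of (fun (_ : Fin m) j => if j = 0 then (-1 : RatFunc ℝ) else 0))
      = !![xk - xk⁻¹ * (m : RatFunc ℝ), -1, -1, -1; -1, xk, -1, -1; -1, -1, xk, 0;
          -1, -1, 0, xk] := by
    rw [Matrix.mul_smul, Matrix.mul_one, Matrix.smul_mul]
    ext i j
    fin_cases i <;> fin_cases j <;>
      simp [Matrix.smul_apply, Matrix.mul_apply, Matrix.vecHead, Matrix.vecTail,
        Finset.sum_const, nsmul_eq_mul]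
  rw [hfour]
  have hdet4 : (!![xk - xk⁻¹ * (m : RatFunc ℝ), -1, -1, -1; -1, xk, -1, -1; -1, -1, xk, 0;
      -1, -1, 0, xk]).det
      = xk^4 - 5*xk^2 - 4*xk + 2*(m : RatFunc ℝ)*(xk*xk⁻¹) - (m : RatFunc ℝ)*xk^3*xk⁻¹ := by
    have e1 : (Fin.succAbove 1 2 : Fin 4) = 3 := rfl
    have e2 : (Fin.succAbove 2 2 : Fin 4) = 3 := rfl
    have e3 : (Fin.succAbove 3 2 : Fin 4) = 2 := rfl
    simp [Matrix.det_succ_row_zero, Fin.sum_univ_succ, e1, e2, e3]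
    ring
  rw [hdet4]
  simp only [_root_.map_mul, map_pow, map_sub, map_add, RatFunc.algebraMap_X,
    RatFunc.algebraMap_C, map_ofNat, map_natCast, ← hxk]
  field_simp
  ring

lemma aux_charpoly_eq_prod {n : Type*} [Fintype n] [DecidableEq n] (A : Matrix n n ℝ)
    (hA : A.IsHermitian) : A.charpoly = ∏ i, (X - C (hA.eigenvalues i)) := by
  set U : Matrix n n ℝ := (hA.eigenvectorUnitary : Matrix n n ℝ) with hU
  set D : Matrix n n ℝ := diagonal (RCLike.ofReal ∘ hA.eigenvalues) with hD
  have hU1 : U * star U = 1 := Matrix.mem_unitaryGroup_iff.mp hA.eigenvectorUnitary.2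
  have hspec : A = U * D * star U := hA.spectral_theorem
  have hdiagX : (diagonal fun _ : n => (X:ℝ[X])) = (X:ℝ[X]) • (1 : Matrix n n ℝ[X]) := by
    ext i j; by_cases h : i = j <;> simp [h, Matrix.one_apply, Matrix.diagonal_apply]
  have hUK : (U.map (C : ℝ →+* ℝ[X])) * ((star U).map C) = 1 := by
    rw [← Matrix.map_mul, hU1]; simp
  have hcm : charmatrix A = (U.map C) * charmatrix D * ((star U).map C) := by
    rw [charmatrix, charmatrix, hspec]
    have hmap : ((U * D * star U).map (C : ℝ →+* ℝ[X]) : Matrix n n ℝ[X])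
        = U.map C * D.map C * (star U).map C := by
      simp [Matrix.map_mul]
    rw [RingHom.mapMatrix_apply, RingHom.mapMatrix_apply, hmap, Matrix.scalar_apply, hdiagX]
    rw [Matrix.mul_sub, Matrix.sub_mul, Matrix.mul_smul, Matrix.mul_one, Matrix.smul_mul, hUK]
  have hdet : A.charpoly = (charmatrix D).det := by
    rw [Matrix.charpoly, hcm, Matrix.det_mul, Matrix.det_mul, mul_comm, ← mul_assoc,
      ← Matrix.det_mul, ← Matrix.map_mul,
      show star U * U = 1 from Matrix.mem_unitaryGroup_iff'.mp hA.eigenvectorUnitary.2]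
    simp
  rw [hdet]
  have hcd : charmatrix D = diagonal fun i => X - C (hA.eigenvalues i) := by
    ext i j
    by_cases h : i = j <;>
      simp [h, hD, charmatrix_apply, Matrix.diagonal_apply]
  rw [hcd, Matrix.det_diagonal]

end Aux

/-- from the proof of Proposition 3.7.  For `n ≥ 5`,
`λ₁(𝐆₁) > √(n-1)` and `φ(𝐆₁,x) = x^(n-4) (x⁴ - (n+1)x² - 4x + 2(n-4))`. -/
theorem statement_18 {n : ℕ} (hn : 5 ≤ n) {V : Type*} [Fintype V]
    (G₁ : SimpleGraph V) (hcard : Fintype.card V = n) (hG₁ : IsG1 G₁) :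
    Real.sqrt ((n : ℝ) - 1) < lambda1 G₁ ∧
    charPoly G₁ = X ^ (n - 4) *
      (X ^ 4 - C ((n : ℝ) + 1) * X ^ 2 - C 4 * X + C (2 * ((n : ℝ) - 4))) := by
  letI := Classical.decEq V
  letI := Classical.decRel G₁.Adj
  set m := n - 4 with hmdef
  have hm : 1 ≤ m := by omega
  have hmn : (m : ℝ) = (n : ℝ) - 4 := by
    rw [hmdef, Nat.cast_sub (by omega : 4 ≤ n)]; norm_num
  obtain ⟨u, v, a, b, hune, huna, hunb, hvna, hvnb, hanb, hadj⟩ := aux_g1_structure hG₁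
  have Auv : G₁.Adj u v := (hadj u v).mpr (Or.inl (Or.inl rfl))
  have Aua : G₁.Adj u a := (hadj u a).mpr (Or.inl (Or.inr (Or.inl rfl)))
  have Aav : G₁.Adj a v := (hadj a v).mpr (Or.inl (Or.inr (Or.inr (Or.inl rfl))))
  have Aub : G₁.Adj u b := (hadj u b).mpr (Or.inl (Or.inr (Or.inr (Or.inr (Or.inl rfl)))))
  have Abv : G₁.Adj b v := (hadj b v).mpr (Or.inl (Or.inr (Or.inr (Or.inr (Or.inr rfl)))))
  have hS : ∀ p : V, p ∉ ({u,v,a,b} : Set V) → p ≠ u ∧ p ≠ v ∧ p ≠ a ∧ p ≠ b := by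
    intro p hp
    simp only [Set.mem_insert_iff, Set.mem_singleton_iff, not_or] at hp
    tauto
  have Apu : ∀ p, p ∉ ({u,v,a,b} : Set V) → G₁.Adj p u :=
    fun p hp => (hadj p u).mpr (Or.inr (Or.inl ⟨hp, rfl⟩))
  have Anot : ∀ p, p ∉ ({u,v,a,b} : Set V) → ∀ y, y ≠ u → ¬ G₁.Adj p y := by
    intro p hp y hy hAd
    obtain ⟨h1, h2, h3, h4⟩ := hS p hp
    rcases (hadj p y).mp hAd with (h'|h'|h'|h'|h') | ⟨_, h'⟩ | ⟨_, h'⟩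
    · rw [Sym2.eq_iff] at h'; tauto
    · rw [Sym2.eq_iff] at h'; tauto
    · rw [Sym2.eq_iff] at h'; tauto
    · rw [Sym2.eq_iff] at h'; tauto
    · rw [Sym2.eq_iff] at h'; tauto
    · exact hy h'
    · exact h1 h'
  have Anab : ¬ G₁.Adj a b := by
    intro hAd
    rcases (hadj a b).mp hAd with (h'|h'|h'|h'|h') | ⟨ho, _⟩ | ⟨ho, _⟩
    · rw [Sym2.eq_iff] at h'
      rcases h' with ⟨h1', h2'⟩ | ⟨h1', h2'⟩ <;> simp_all
    · rw [Sym2.eq_iff] at h'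
      rcases h' with ⟨h1', h2'⟩ | ⟨h1', h2'⟩ <;> simp_all
    · rw [Sym2.eq_iff] at h'
      rcases h' with ⟨h1', h2'⟩ | ⟨h1', h2'⟩ <;> simp_all
    · rw [Sym2.eq_iff] at h'
      rcases h' with ⟨h1', h2'⟩ | ⟨h1', h2'⟩ <;> simp_all
    · rw [Sym2.eq_iff] at h'
      rcases h' with ⟨h1', h2'⟩ | ⟨h1', h2'⟩ <;> simp_all
    · exact ho (by simp)
    · exact ho (by simp)
  have Anba : ¬ G₁.Adj b a := fun hh => Anab hh.symm
  -- the finset of branch/path vertices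
  set s : Finset V := {u, v, a, b} with hsdef
  have hsset : ∀ x, x ∈ s ↔ x ∈ ({u,v,a,b} : Set V) := by intro x; simp [hsdef]
  have hcards : s.card = 4 := by
    rw [hsdef, Finset.card_insert_of_notMem (by simp [hune, huna, hunb]),
      Finset.card_insert_of_notMem (by simp [hvna, hvnb]),
      Finset.card_insert_of_notMem (by simp [hanb]), Finset.card_singleton]
  have hcompl : Fintype.card {x // x ∉ s} = m := by
    have h1 : Fintype.card {x // x ∈ s} = 4 := by
      simpa using (Fintype.card_coe s).trans hcards
    have h2 := Fintype.card_subtype_compl (fun x => x ∈ s)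
    rw [h1, hcard] at h2
    omega
  set c : {x // x ∉ s} ≃ Fin m := Fintype.equivFinOfCardEq hcompl with hcdef
  set g : Fin 4 → V := ![u, v, a, b] with hgdef
  set h : Fin 4 ⊕ Fin m → V := Sum.elim g fun k => (c.symm k).1 with hhdef
  have hgmem : ∀ i, g i ∈ s := by
    intro i
    fin_cases i
    · show u ∈ s; simp [hsdef]
    · show v ∈ s; simp [hsdef]
    · show a ∈ s; simp [hsdef]
    · show b ∈ s; simp [hsdef]
  have hbij : Function.Bijective h := by
    constructor
    · rintro (i | k) (j | l) hxy
      · fin_cases i <;> fin_cases j <;>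
          first
            | rfl
            | exact absurd hxy hune | exact absurd hxy hune.symm
            | exact absurd hxy huna | exact absurd hxy huna.symm
            | exact absurd hxy hunb | exact absurd hxy hunb.symm
            | exact absurd hxy hvna | exact absurd hxy hvna.symm
            | exact absurd hxy hvnb | exact absurd hxy hvnb.symm
            | exact absurd hxy hanb | exact absurd hxy hanb.symm
      · have hgi : g i = ((c.symm l : {x // x ∉ s}) : V) := hxy
        exact absurd (hgi ▸ hgmem i) (c.symm l).2
      · have hgj : g j = ((c.symm k : {x // x ∉ s}) : V) := hxy.symm
        exact absurd (hgj ▸ hgmem j) (c.symm k).2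
      · exact congrArg Sum.inr (c.symm.injective (Subtype.ext hxy))
    · intro x
      by_cases hx : x ∈ s
      · have : x = u ∨ x = v ∨ x = a ∨ x = b := by simpa [hsdef] using hx
        rcases this with rfl | rfl | rfl | rfl
        exacts [⟨Sum.inl 0, rfl⟩, ⟨Sum.inl 1, rfl⟩, ⟨Sum.inl 2, rfl⟩, ⟨Sum.inl 3, rfl⟩]
      · exact ⟨Sum.inr (c ⟨x, hx⟩), by simp [hhdef]⟩
  set e : V ≃ (Fin 4 ⊕ Fin m) := (Equiv.ofBijective h hbij).symm with hedef
  have hre : Matrix.reindex e e (G₁.adjMatrix ℝ)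
      = Matrix.fromBlocks auxM4 (auxBm m) (auxBtm m) 0 := by
    have houts : ∀ k : Fin m, ((c.symm k : {x // x ∉ s}) : V) ∉ ({u,v,a,b} : Set V) := by
      intro k
      have := (c.symm k).2
      rw [← hsset]
      exact this
    ext i j
    rcases i with i | k <;> rcases j with j | l
    · fin_cases i <;> fin_cases j
      · show (G₁.adjMatrix ℝ) u u = 0; simp
      · show (G₁.adjMatrix ℝ) u v = 1; simp [Auv]
      · show (G₁.adjMatrix ℝ) u a = 1; simp [Aua]
      · show (G₁.adjMatrix ℝ) u b = 1; simp [Aub]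
      · show (G₁.adjMatrix ℝ) v u = 1; simp [Auv.symm]
      · show (G₁.adjMatrix ℝ) v v = 0; simp
      · show (G₁.adjMatrix ℝ) v a = 1; simp [Aav.symm]
      · show (G₁.adjMatrix ℝ) v b = 1; simp [Abv.symm]
      · show (G₁.adjMatrix ℝ) a u = 1; simp [Aua.symm]
      · show (G₁.adjMatrix ℝ) a v = 1; simp [Aav]
      · show (G₁.adjMatrix ℝ) a a = 0; simp
      · show (G₁.adjMatrix ℝ) a b = 0; simp [Anab]
      · show (G₁.adjMatrix ℝ) b u = 1; simp [Aub.symm]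
      · show (G₁.adjMatrix ℝ) b v = 1; simp [Abv]
      · show (G₁.adjMatrix ℝ) b a = 0; simp [Anba]
      · show (G₁.adjMatrix ℝ) b b = 0; simp
    · have hps := houts l
      have Nv : ¬ G₁.Adj v ((c.symm l : {x // x ∉ s}) : V) :=
        fun hh => Anot _ hps v hune.symm hh.symm
      have Na : ¬ G₁.Adj a ((c.symm l : {x // x ∉ s}) : V) :=
        fun hh => Anot _ hps a huna.symm hh.symm
      have Nb : ¬ G₁.Adj b ((c.symm l : {x // x ∉ s}) : V) :=
        fun hh => Anot _ hps b hunb.symm hh.symm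
      fin_cases i
      · show (G₁.adjMatrix ℝ) u ((c.symm l : {x // x ∉ s}) : V) = 1; simp [(Apu _ hps).symm]
      · show (G₁.adjMatrix ℝ) v ((c.symm l : {x // x ∉ s}) : V) = 0; simp [Nv]
      · show (G₁.adjMatrix ℝ) a ((c.symm l : {x // x ∉ s}) : V) = 0; simp [Na]
      · show (G₁.adjMatrix ℝ) b ((c.symm l : {x // x ∉ s}) : V) = 0; simp [Nb]
    · have hps := houts k
      have Nv : ¬ G₁.Adj ((c.symm k : {x // x ∉ s}) : V) v := Anot _ hps v hune.symm
      have Na : ¬ G₁.Adj ((c.symm k : {x // x ∉ s}) : V) a := Anot _ hps a huna.symm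
      have Nb : ¬ G₁.Adj ((c.symm k : {x // x ∉ s}) : V) b := Anot _ hps b hunb.symm
      fin_cases j
      · show (G₁.adjMatrix ℝ) ((c.symm k : {x // x ∉ s}) : V) u = 1; simp [Apu _ hps]
      · show (G₁.adjMatrix ℝ) ((c.symm k : {x // x ∉ s}) : V) v = 0; simp [Nv]
      · show (G₁.adjMatrix ℝ) ((c.symm k : {x // x ∉ s}) : V) a = 0; simp [Na]
      · show (G₁.adjMatrix ℝ) ((c.symm k : {x // x ∉ s}) : V) b = 0; simp [Nb]
    · have hps := houts k
      have hqs := houts l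
      have Npq : ¬ G₁.Adj ((c.symm k : {x // x ∉ s}) : V) ((c.symm l : {x // x ∉ s}) : V) :=
        Anot _ hps _ (hS _ hqs).1
      show (G₁.adjMatrix ℝ) ((c.symm k : {x // x ∉ s}) : V) ((c.symm l : {x // x ∉ s}) : V) = 0
      simp [Npq]
  have hchar : (G₁.adjMatrix ℝ).charpoly
      = X ^ m * (X^4 - C ((m:ℝ)+5) * X^2 - C 4 * X + C (2*(m:ℝ))) := by
    rw [← Matrix.charpoly_reindex e, hre, aux_block_charpoly m]
  have hc1 : ((m:ℝ)+5) = (n:ℝ)+1 := by rw [hmn]; ring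
  have hc2 : (2*(m:ℝ)) = 2*((n:ℝ)-4) := by rw [hmn]
  have hcharPoly : charPoly G₁ = X ^ (n-4) *
      (X ^ 4 - C ((n : ℝ) + 1) * X ^ 2 - C 4 * X + C (2 * ((n : ℝ) - 4))) := by
    show (G₁.adjMatrix ℝ).charpoly = _
    rw [hchar, hc1, hc2]
  refine ⟨?_, hcharPoly⟩
  -- eigenvalue bound
  haveI : Nonempty V := Fintype.card_pos_iff.mp (by omega)
  have hherm : (G₁.adjMatrix ℝ).IsHermitian := by
    rw [Matrix.IsHermitian, Matrix.conjTranspose_eq_transpose_of_trivial]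
    exact G₁.isSymm_adjMatrix
  have hprod := aux_charpoly_eq_prod _ hherm
  set r : ℝ := Real.sqrt ((n:ℝ)-1) with hr
  have hn5 : (5:ℝ) ≤ (n:ℝ) := by exact_mod_cast hn
  have hnr : (0:ℝ) ≤ (n:ℝ)-1 := by linarith
  have hr2 : r^2 = (n:ℝ)-1 := Real.sq_sqrt hnr
  have hrpos : 0 < r := Real.sqrt_pos.mpr (by linarith)
  show r < lambda1 G₁
  have hlam : lambda1 G₁ = ⨆ i, hherm.eigenvalues i := rfl
  rw [hlam]
  by_contra hle
  push_neg at hle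
  have hall : ∀ i, hherm.eigenvalues i ≤ r := fun i =>
    le_trans (le_ciSup (Set.Finite.bddAbove (Set.finite_range _)) i) hle
  have hevalpos : 0 ≤ Polynomial.eval r (G₁.adjMatrix ℝ).charpoly := by
    rw [hprod, Polynomial.eval_prod]
    apply Finset.prod_nonneg
    intro i _
    simp only [Polynomial.eval_sub, Polynomial.eval_X, Polynomial.eval_C]
    linarith [hall i]
  have hevalneg : Polynomial.eval r (G₁.adjMatrix ℝ).charpoly < 0 := by
    rw [hchar]
    have hquart : r^4 - ((m:ℝ)+5)*r^2 - 4*r + 2*(m:ℝ) = -6 - 4*r := by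
      rw [show r^4 = (r^2)^2 by ring, hr2, hmn]
      ring
    simp only [Polynomial.eval_mul, Polynomial.eval_pow, Polynomial.eval_sub,
      Polynomial.eval_add, Polynomial.eval_X, Polynomial.eval_C]
    have : r^4 - ((m:ℝ)+5)*r^2 - 4*r + 2*(m:ℝ) < 0 := by rw [hquart]; linarith
    have hrm : 0 < r ^ m := pow_pos hrpos m
    nlinarith
  linarith


end EstradaBicyclic
end
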